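/- Under the hypotheses of the Enhanced Diamond Lemma, any closed (undirected) path in the graph is equivalent to the trivial path at its basepoint. -/
import Mathlib


/-- Undirected walks in a directed graph: edges may be traversed forwards
(`consF`) or backwards (`consB`). -/
inductive Walk {V : Type*} (E : V → V → Prop) : V → V → Type _
  | nil (x : V) : Walk E x x
  | consF {x y z : V} (h : E x y) (w : Walk E y z) : Walk E x z
  | consB {x y z : V} (h : E y x) (w : Walk E y z) : Walk E x z

namespace Walk

variable {V : Type*} {E : V → V → Prop}

/-- Concatenation of walks. -/
def append : ∀ {x y z : V}, Walk E x y → Walk E y z → Walk E x z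
  | _, _, _, nil _, q => q
  | _, _, _, consF h p, q => consF h (p.append q)
  | _, _, _, consB h p, q => consB h (p.append q)

/-- The reverse of a walk. -/
def reverse : ∀ {x y : V}, Walk E x y → Walk E y x
  | _, _, nil x => nil x
  | _, _, consF h p => p.reverse.append (consB h (nil _))
  | _, _, consB h p => p.reverse.append (consF h (nil _))

/-- A walk is directed if all its edges are traversed forwards. -/
inductive IsDirected : ∀ {x y : V}, Walk E x y → Prop
  | nil (x : V) : IsDirected (nil x)
  | consF {x y z : V} (h : E x y) {w : Walk E y z} :
      IsDirected w → IsDirected (consF h w)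

end Walk

/-- An equivalence relation on undirected paths between each pair of vertices,
satisfying the trivial-cycles axiom and the invariance axiom (equivalence is
preserved and reflected by extending both paths with a common edge, at either
endpoint, in either orientation). -/
structure PathEquiv {V : Type*} (E : V → V → Prop) where
  eqv : ∀ {x y : V}, Walk E x y → Walk E x y → Prop
  refl : ∀ {x y : V} (p : Walk E x y), eqv p p
  symm : ∀ {x y : V} {p q : Walk E x y}, eqv p q → eqv q p
  trans : ∀ {x y : V} {p q r : Walk E x y}, eqv p q → eqv q r → eqv p r
  /-- Trivial cycles: `f⁻¹ · f` is equivalent to the trivial path at the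
  starting vertex of `f`. -/
  trivial_cycle : ∀ {x y : V} (p : Walk E x y),
    eqv (p.append p.reverse) (Walk.nil x)
  /-- Invariance under extension by a forward edge at the far endpoint. -/
  inv_right_F : ∀ {x y z : V} (p q : Walk E x y) (h : E y z),
    eqv p q ↔ eqv (p.append (Walk.consF h (Walk.nil z)))
      (q.append (Walk.consF h (Walk.nil z)))
  /-- Invariance under extension by a backward edge at the far endpoint. -/
  inv_right_B : ∀ {x y z : V} (p q : Walk E x y) (h : E z y),
    eqv p q ↔ eqv (p.append (Walk.consB h (Walk.nil z)))
      (q.append (Walk.consB h (Walk.nil z)))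
  /-- Invariance under extension by a forward edge at the starting vertex. -/
  inv_left_F : ∀ {w x y : V} (p q : Walk E x y) (h : E w x),
    eqv p q ↔ eqv (Walk.consF h p) (Walk.consF h q)
  /-- Invariance under extension by a backward edge at the starting vertex. -/
  inv_left_B : ∀ {w x y : V} (p q : Walk E x y) (h : E x w),
    eqv p q ↔ eqv (Walk.consB h p) (Walk.consB h q)

namespace Walk

variable {V : Type*} {E : V → V → Prop}

theorem append_nil : ∀ {x y : V} (p : Walk E x y), p.append (nil y) = p
  | _, _, nil _ => rfl
  | _, _, consF h p => by rw [append, append_nil p]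
  | _, _, consB h p => by rw [append, append_nil p]

theorem append_assoc : ∀ {x y z w : V} (p : Walk E x y) (q : Walk E y z) (r : Walk E z w),
    (p.append q).append r = p.append (q.append r)
  | _, _, _, _, nil _, _, _ => rfl
  | _, _, _, _, consF h p, q, r => by
      show consF h ((p.append q).append r) = consF h (p.append (q.append r))
      rw [append_assoc p q r]
  | _, _, _, _, consB h p, q, r => by
      show consB h ((p.append q).append r) = consB h (p.append (q.append r))
      rw [append_assoc p q r]

theorem IsDirected.append {x y z : V} {p : Walk E x y} {q : Walk E y z}
    (hp : p.IsDirected) (hq : q.IsDirected) : (p.append q).IsDirected := by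
  induction hp with
  | nil => exact hq
  | consF h _ ih => exact .consF h (ih hq)

/-- endpoints of nonempty directed walks are transitively below the start. -/
theorem reaches : ∀ {x w : V} {p : Walk E x w}, p.IsDirected →
    x = w ∨ Relation.TransGen (fun a b => E b a) w x
  | _, _, nil _, _ => Or.inl rfl
  | _, _, consF h p, hp => by
      cases hp with
      | consF _ hp =>
        rcases reaches hp with rfl | ht
        · exact Or.inr (Relation.TransGen.single h)
        · exact Or.inr (ht.tail h)

end Walk

namespace PathEquiv

variable {V : Type*} {E : V → V → Prop} (S : PathEquiv E)

open Walk

theorem eqv_append_left : ∀ {x y z : V} (p : Walk E x y) {q q' : Walk E y z},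
    S.eqv q q' → S.eqv (p.append q) (p.append q')
  | _, _, _, nil _, _, _, h => h
  | _, _, _, consF e p, _, _, h =>
      (S.inv_left_F _ _ e).1 (eqv_append_left p h)
  | _, _, _, consB e p, _, _, h =>
      (S.inv_left_B _ _ e).1 (eqv_append_left p h)

theorem eqv_append_right_iff : ∀ {x y z : V} (p q : Walk E x y) (r : Walk E y z),
    (S.eqv (p.append r) (q.append r) ↔ S.eqv p q)
  | _, _, _, p, q, nil _ => by rw [append_nil, append_nil]
  | _, _, _, p, q, consF h r => by
      have e1 : p.append (consF h r) = (p.append (consF h (nil _))).append r := by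
        rw [append_assoc]; rfl
      have e2 : q.append (consF h r) = (q.append (consF h (nil _))).append r := by
        rw [append_assoc]; rfl
      rw [e1, e2, eqv_append_right_iff _ _ r, ← S.inv_right_F]
  | _, _, _, p, q, consB h r => by
      have e1 : p.append (consB h r) = (p.append (consB h (nil _))).append r := by
        rw [append_assoc]; rfl
      have e2 : q.append (consB h r) = (q.append (consB h (nil _))).append r := by
        rw [append_assoc]; rfl
      rw [e1, e2, eqv_append_right_iff _ _ r, ← S.inv_right_B]

theorem eqv_append_right {x y z : V} {p q : Walk E x y} (r : Walk E y z)
    (h : S.eqv p q) : S.eqv (p.append r) (q.append r) :=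
  (S.eqv_append_right_iff p q r).2 h

end PathEquiv

section Newman

variable {V : Type*} {E : V → V → Prop}

open Walk

/-- Newman's lemma with equivalences: confluence of directed walks. -/
theorem confl (S : PathEquiv E)
    (dcc : WellFounded (fun a b => E b a))
    (ediamond : ∀ (x y z : V) (h₁ : E x y) (h₂ : E x z),
      ∃ (w : V) (p : Walk E y w) (q : Walk E z w),
        p.IsDirected ∧ q.IsDirected ∧
          S.eqv (Walk.consF h₁ p) (Walk.consF h₂ q)) :
    ∀ (x : V) {y z : V} (p : Walk E x y) (q : Walk E x z),
      p.IsDirected → q.IsDirected →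
      ∃ (w : V) (p' : Walk E y w) (q' : Walk E z w),
        p'.IsDirected ∧ q'.IsDirected ∧ S.eqv (p.append p') (q.append q') := by
  intro x
  induction x using dcc.induction with
  | _ x IH =>
    intro y z p q hp hq
    cases p with
    | nil =>
      refine ⟨z, q, Walk.nil z, hq, IsDirected.nil z, ?_⟩
      rw [append_nil]; exact S.refl q
    | consB h p => cases hp
    | consF h₁ p₁ =>
      cases hp with
      | consF _ hp₁ =>
        cases q with
        | nil =>
          refine ⟨y, Walk.nil y, consF h₁ p₁, IsDirected.nil y, IsDirected.consF h₁ hp₁, ?_⟩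
          rw [append_nil]; exact S.refl _
        | consB h q => cases hq
        | consF h₂ q₁ =>
          cases hq with
          | consF _ hq₁ =>
            obtain ⟨v, pa, qb, hpa, hqb, heq⟩ := ediamond _ _ _ h₁ h₂
            obtain ⟨t, c, d, hc, hd, h1⟩ := IH _ h₁ p₁ pa hp₁ hpa
            obtain ⟨s, e, f, he, hf, h2⟩ := IH _ h₂ q₁ (qb.append d) hq₁ (hqb.append hd)
            refine ⟨s, c.append f, e, hc.append hf, he, ?_⟩
            show S.eqv (consF h₁ (p₁.append (c.append f))) (consF h₂ (q₁.append e))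
            have s1 : S.eqv (consF h₁ (p₁.append (c.append f)))
                (consF h₁ ((pa.append d).append f)) := by
              rw [← append_assoc]
              exact (S.inv_left_F _ _ h₁).1 (S.eqv_append_right f h1)
            have s2 : S.eqv (consF h₁ ((pa.append d).append f))
                (consF h₂ ((qb.append d).append f)) := by
              rw [append_assoc pa d f, append_assoc qb d f]
              exact S.eqv_append_right (d.append f) heq
            have s3 : S.eqv (consF h₂ ((qb.append d).append f))
                (consF h₂ (q₁.append e)) :=
              (S.inv_left_F _ _ h₂).1 (S.symm h2)
            exact S.trans s1 (S.trans s2 s3)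

/-- A directed closed walk is trivial. -/
theorem dir_closed_nil (S : PathEquiv E)
    (dcc : WellFounded (fun a b => E b a)) :
    ∀ {x : V} (q : Walk E x x), q.IsDirected → S.eqv q (Walk.nil x) := by
  intro x q hq
  cases q with
  | nil => exact S.refl _
  | consB h q => cases hq
  | consF h q₁ =>
    cases hq with
    | consF _ hq₁ =>
      exfalso
      have : Relation.TransGen (fun a b => E b a) x x := by
        rcases reaches hq₁ with rfl | ht
        · exact Relation.TransGen.single h
        · exact ht.tail h
      exact (dcc.transGen.isIrrefl).irrefl x this

/-- Any two coinitial, cofinal directed walks are equivalent. -/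
theorem eqv_of_directed (S : PathEquiv E)
    (dcc : WellFounded (fun a b => E b a))
    (ediamond : ∀ (x y z : V) (h₁ : E x y) (h₂ : E x z),
      ∃ (w : V) (p : Walk E y w) (q : Walk E z w),
        p.IsDirected ∧ q.IsDirected ∧
          S.eqv (Walk.consF h₁ p) (Walk.consF h₂ q)) :
    ∀ (x : V) {w : V} (p q : Walk E x w),
      p.IsDirected → q.IsDirected → S.eqv p q := by
  intro x
  induction x using dcc.transGen.induction with
  | _ x IH =>
    intro w p q hp hq
    cases p with
    | nil => exact S.symm (dir_closed_nil S dcc q hq)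
    | consB h p => cases hp
    | consF h₁ p₁ =>
      cases hp with
      | consF _ hp₁ =>
        cases q with
        | nil => exact dir_closed_nil S dcc _ (.consF h₁ hp₁)
        | consB h q => cases hq
        | consF h₂ q₁ =>
          cases hq with
          | consF _ hq₁ =>
            obtain ⟨v, pa, qb, hpa, hqb, heq⟩ := ediamond _ _ _ h₁ h₂
            obtain ⟨t, c, d, hc, hd, h1⟩ := confl S dcc ediamond _ p₁ pa hp₁ hpa
            obtain ⟨s, e, f, he, hf, h2⟩ :=
              confl S dcc ediamond _ q₁ (qb.append d) hq₁ (hqb.append hd)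
            have hwlt : Relation.TransGen (fun a b => E b a) w x := by
              rcases reaches hp₁ with rfl | ht
              · exact Relation.TransGen.single h₁
              · exact ht.tail h₁
            have hcw : S.eqv (c.append f) e := IH w hwlt _ _ (hc.append hf) he
            apply (S.eqv_append_right_iff _ _ (c.append f)).1
            show S.eqv (consF h₁ (p₁.append (c.append f)))
              (consF h₂ (q₁.append (c.append f)))
            have s1 : S.eqv (consF h₁ (p₁.append (c.append f)))
                (consF h₁ ((pa.append d).append f)) := by
              rw [← append_assoc]
              exact (S.inv_left_F _ _ h₁).1 (S.eqv_append_right f h1)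
            have s2 : S.eqv (consF h₁ ((pa.append d).append f))
                (consF h₂ ((qb.append d).append f)) := by
              rw [append_assoc pa d f, append_assoc qb d f]
              exact S.eqv_append_right (d.append f) heq
            have s3 : S.eqv (consF h₂ ((qb.append d).append f))
                (consF h₂ (q₁.append e)) :=
              (S.inv_left_F _ _ h₂).1 (S.symm h2)
            have s4 : S.eqv (consF h₂ (q₁.append e))
                (consF h₂ (q₁.append (c.append f))) :=
              (S.inv_left_F _ _ h₂).1 (S.eqv_append_left q₁ (S.symm hcw))
            exact S.trans s1 (S.trans s2 (S.trans s3 s4))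

/-- Every walk is equivalent to a valley `d · u⁻¹` with `d`, `u` directed. -/
theorem to_valley (S : PathEquiv E)
    (dcc : WellFounded (fun a b => E b a))
    (ediamond : ∀ (x y z : V) (h₁ : E x y) (h₂ : E x z),
      ∃ (w : V) (p : Walk E y w) (q : Walk E z w),
        p.IsDirected ∧ q.IsDirected ∧
          S.eqv (Walk.consF h₁ p) (Walk.consF h₂ q)) :
    ∀ {x y : V} (p : Walk E x y),
      ∃ (t : V) (d : Walk E x t) (u : Walk E y t),
        d.IsDirected ∧ u.IsDirected ∧ S.eqv p (d.append u.reverse) := by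
  intro x y p
  induction p with
  | nil x => exact ⟨x, Walk.nil x, Walk.nil x, IsDirected.nil x, IsDirected.nil x, S.refl _⟩
  | consF h w ih =>
    obtain ⟨t, d, u, hd, hu, heq⟩ := ih
    exact ⟨t, consF h d, u, .consF h hd, hu, (S.inv_left_F _ _ h).1 heq⟩
  | consB h w ih =>
    obtain ⟨t, d, u, hd, hu, heq⟩ := ih
    -- h : E a x, d : a → t directed
    obtain ⟨s, d', u'', hd', hu'', hconf⟩ :=
      confl S dcc ediamond _ (consF h (nil _)) d (.consF h (.nil _)) hd
    refine ⟨s, d', u.append u'', hd', hu.append hu'', ?_⟩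
    -- hconf : eqv ((consF h nil).append d') (d.append u'')
    have hconf' : S.eqv (consF h d') (d.append u'') := hconf
    -- reverse (u.append u'') : need (u.append u'').reverse = u''.reverse.append u.reverse
    have hrev : ∀ {a b c : V} (p : Walk E a b) (q : Walk E b c),
        (p.append q).reverse = q.reverse.append p.reverse := by
      intro a b c p q
      induction p with
      | nil a =>
        show q.reverse = q.reverse.append (Walk.nil a).reverse
        rw [show (Walk.nil a : Walk E a a).reverse = Walk.nil a from rfl, append_nil]
      | consF e p ih' =>
        show ((p.append q).reverse).append (consB e (nil _)) = _
        rw [ih', append_assoc]; rfl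
      | consB e p ih' =>
        show ((p.append q).reverse).append (consF e (nil _)) = _
        rw [ih', append_assoc]; rfl
    -- Step A : eqv (consB h w) (consB h (d.append u.reverse))
    have sA : S.eqv (consB h w) (consB h (d.append u.reverse)) :=
      (S.inv_left_B _ _ h).1 heq
    -- Step B : d ≈ (d.append u'').append u''.reverse
    have sB : S.eqv d ((d.append u'').append u''.reverse) := by
      have : S.eqv (d.append (nil t)) (d.append (u''.append u''.reverse)) :=
        S.eqv_append_left d (S.symm (S.trivial_cycle u''))
      rw [append_nil, ← append_assoc] at this
      exact this
    -- Step C : d.append u.reverse ≈ ((consF h d').append u''.reverse).append u.reverse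
    have sC : S.eqv (d.append u.reverse)
        (((consF h d').append u''.reverse).append u.reverse) := by
      refine S.eqv_append_right u.reverse ?_
      exact S.trans sB (S.eqv_append_right u''.reverse (S.symm hconf'))
    have sD : S.eqv (consB h w)
        (consB h (((consF h d').append u''.reverse).append u.reverse)) :=
      S.trans sA ((S.inv_left_B _ _ h).1 sC)
    -- Step E : cancel the b·f pair at the front
    have sE : S.eqv (consB h (consF h ((d'.append u''.reverse).append u.reverse)))
        ((d'.append u''.reverse).append u.reverse) := by
      have htc : S.eqv (consB h (consF h (nil _))) (nil _) := by
        have := S.trivial_cycle (consB h (nil _))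
        exact this
      have := S.eqv_append_right ((d'.append u''.reverse).append u.reverse) htc
      exact this
    have sF : S.eqv (consB h w) ((d'.append u''.reverse).append u.reverse) := by
      refine S.trans sD ?_
      show S.eqv (consB h (consF h ((d'.append u''.reverse).append u.reverse)))
        ((d'.append u''.reverse).append u.reverse)
      exact sE
    rw [hrev u u'', ← append_assoc]
    exact sF

end Newman

/-- Under the hypotheses of the Enhanced Diamond Lemma, any closed
(undirected) path is equivalent to the trivial path at its basepoint. -/
theorem enhanced_diamond_closed_path_trivial {V : Type*} (E : V → V → Prop)
    (S : PathEquiv E)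
    (dcc : WellFounded (fun a b => E b a))
    (ediamond : ∀ (x y z : V) (h₁ : E x y) (h₂ : E x z),
      ∃ (w : V) (p : Walk E y w) (q : Walk E z w),
        p.IsDirected ∧ q.IsDirected ∧
          S.eqv (Walk.consF h₁ p) (Walk.consF h₂ q)) :
    ∀ (x : V) (p : Walk E x x), S.eqv p (Walk.nil x) := by
  intro x p
  obtain ⟨t, d, u, hd, hu, heq⟩ := to_valley S dcc ediamond p
  have h1 : S.eqv d u := eqv_of_directed S dcc ediamond x d u hd hu
  have h2 : S.eqv (d.append u.reverse) (u.append u.reverse) :=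
    S.eqv_append_right u.reverse h1
  exact S.trans heq (S.trans h2 (S.trivial_cycle u))
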